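/- Let λ, λ₁, ..., λ_n be complex numbers each of absolute value strictly greater than 1. Then there exists a sequence of tuples of positive integers (j_ℓ, j_{1,ℓ}, ..., j_{n,ℓ}) with j_ℓ → ∞ such that |λ_i|^{j_{i,ℓ}} / |λ|^{j_ℓ} has liminf at least 1 for each i ≤ n-1 and λ_n^{j_{n,ℓ}} / λ^{j_ℓ} converges to 1. -/

import Mathlib

open Filter

private lemma strictMono_add_le' (φ : ℕ → ℕ) (h : StrictMono φ) (k m : ℕ) :
    φ k + m ≤ φ (k + m) := by
  induction m with
  | zero => simp
  | succ m ih =>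
    have h1 := h (Nat.lt_succ_self (k + m))
    simp only [Nat.succ_eq_add_one] at h1
    have h2 : k + (m + 1) = k + m + 1 := by omega
    rw [h2]
    omega

/-- Both-sided bounds for the nearest-exponent construction. -/
private lemma ceil_pow_bounds (L M : ℝ) (hL : 1 < L) (hM : 1 < M) (k : ℕ) :
    L ^ k ≤ M ^ ⌈(k : ℝ) * Real.log L / Real.log M⌉₊ ∧
    M ^ ⌈(k : ℝ) * Real.log L / Real.log M⌉₊ ≤ M * L ^ k := by
  have hL0 : (0:ℝ) < L := lt_trans one_pos hL
  have hM0 : (0:ℝ) < M := lt_trans one_pos hM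
  have hr : 0 < Real.log L := Real.log_pos hL
  have hs : 0 < Real.log M := Real.log_pos hM
  set c : ℕ := ⌈(k : ℝ) * Real.log L / Real.log M⌉₊ with hc
  have hLk : L ^ k = Real.exp ((k : ℝ) * Real.log L) := by
    rw [Real.exp_nat_mul, Real.exp_log hL0]
  have hMc : M ^ c = Real.exp ((c : ℝ) * Real.log M) := by
    rw [Real.exp_nat_mul, Real.exp_log hM0]
  have hnn : 0 ≤ (k : ℝ) * Real.log L / Real.log M := by positivity
  constructor
  · rw [hLk, hMc]
    apply Real.exp_le_exp.mpr
    have h1 : (k : ℝ) * Real.log L / Real.log M ≤ c := Nat.le_ceil _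
    calc (k : ℝ) * Real.log L = ((k : ℝ) * Real.log L / Real.log M) * Real.log M := by
          field_simp
      _ ≤ (c : ℝ) * Real.log M := by nlinarith
  · rw [hLk, hMc]
    have h1 : (c : ℝ) < (k : ℝ) * Real.log L / Real.log M + 1 :=
      Nat.ceil_lt_add_one hnn
    have h2 : (c : ℝ) * Real.log M ≤ (k : ℝ) * Real.log L + Real.log M := by
      have : ((k : ℝ) * Real.log L / Real.log M) * Real.log M = (k:ℝ) * Real.log L := by
        field_simp
      nlinarith
    calc Real.exp ((c : ℝ) * Real.log M)
        ≤ Real.exp ((k : ℝ) * Real.log L + Real.log M) := Real.exp_le_exp.mpr h2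
      _ = M * Real.exp ((k : ℝ) * Real.log L) := by
          rw [Real.exp_add, Real.exp_log hM0]; ring

private lemma key (lam mu : ℂ) (hlam : 1 < ‖lam‖) (hmu : 1 < ‖mu‖) :
    ∀ ε : ℝ, 0 < ε → ∀ N : ℕ, ∃ a b : ℕ, N ≤ a ∧ N ≤ b ∧
      ‖mu ^ a / lam ^ b - 1‖ < ε := by
  set L := ‖lam‖ with hLdef
  set M := ‖mu‖ with hMdef
  have hL0 : (0:ℝ) < L := lt_trans one_pos hlam
  have hM0 : (0:ℝ) < M := lt_trans one_pos hmu
  have hr : 0 < Real.log L := Real.log_pos hlam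
  have hs : 0 < Real.log M := Real.log_pos hmu
  set B : ℕ → ℕ := fun a => ⌈(a : ℝ) * Real.log M / Real.log L⌉₊ with hBdef
  set w : ℕ → ℂ := fun a => mu ^ a / lam ^ (B a) with hwdef
  have habs : ∀ a, ‖w a‖ = M ^ a / L ^ (B a) := by
    intro a; simp [hwdef, map_div₀, map_pow]; rfl
  have hbounds : ∀ a : ℕ, M ^ a ≤ L ^ (B a) ∧ L ^ (B a) ≤ L * M ^ a :=
    fun a => ceil_pow_bounds M L hmu hlam a
  have hup : ∀ a, ‖w a‖ ≤ 1 := by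
    intro a
    rw [habs a]
    exact div_le_one_of_le₀ (hbounds a).1 (by positivity)
  have hlo : ∀ a, 1 / L ≤ ‖w a‖ := by
    intro a
    rw [habs a]
    rw [div_le_div_iff₀ hL0 (by positivity)]
    calc (1:ℝ) * L ^ (B a) = L ^ (B a) := one_mul _
      _ ≤ L * M ^ a := (hbounds a).2
      _ = M ^ a * L := mul_comm _ _
  -- compactness
  have hK : IsCompact {z : ℂ | 1 / L ≤ ‖z‖ ∧ ‖z‖ ≤ 1} := by
    apply Metric.isCompact_of_isClosed_isBounded
    · exact (isClosed_le continuous_const continuous_norm).inter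
        (isClosed_le continuous_norm continuous_const)
    · apply Metric.isBounded_closedBall (x := (0:ℂ)) (r := 1) |>.subset
      intro z hz
      simpa using hz.2
  obtain ⟨x, _, φ, hφ, hconv⟩ := hK.tendsto_subseq (x := w) (fun a => ⟨hlo a, hup a⟩)
  intro ε hε N
  set δ := ε / (2 * L) with hδdef
  have hδ : 0 < δ := by positivity
  obtain ⟨K0, hK0⟩ := Metric.tendsto_atTop.mp hconv δ hδ
  set C : ℕ := ⌈((B (φ K0) : ℝ) + N) * Real.log L / Real.log M⌉₊ with hCdef
  set k' : ℕ := K0 + N + C with hk'def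
  have hφle : φ K0 + (N + C) ≤ φ k' := by
    have := strictMono_add_le' φ hφ K0 (N + C)
    simpa [hk'def, Nat.add_assoc] using this
  have hφm : φ K0 ≤ φ k' := by omega
  -- B (φ k') ≥ B (φ K0) + N
  have hBge : B (φ K0) + N ≤ B (φ k') := by
    have h1 : (C : ℝ) ≤ (φ k' : ℝ) := by
      have : C ≤ k' := by omega
      have : C ≤ φ k' := le_trans this (hφ.le_apply)
      exact_mod_cast this
    have h2 : ((B (φ K0) : ℝ) + N) * Real.log L / Real.log M ≤ (C : ℝ) := Nat.le_ceil _
    have h3 : ((B (φ K0) : ℝ) + N) ≤ (φ k' : ℝ) * Real.log M / Real.log L := by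
      rw [le_div_iff₀ hr]
      have h4 : ((B (φ K0) : ℝ) + N) * Real.log L / Real.log M * Real.log M
          = ((B (φ K0) : ℝ) + N) * Real.log L := by field_simp
      nlinarith
    have h5 : ((B (φ K0) : ℝ) + N) ≤ (B (φ k') : ℝ) :=
      le_trans h3 (Nat.le_ceil _)
    exact_mod_cast h5
  set A : ℕ := φ k' - φ K0 with hAdef
  set Bd : ℕ := B (φ k') - B (φ K0) with hBddef
  refine ⟨A, Bd, by omega, by omega, ?_⟩
  have hlam0 : lam ≠ 0 := by
    intro h
    have : L = 0 := by rw [hLdef, h, norm_zero]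
    linarith
  have hmu0 : mu ≠ 0 := by
    intro h
    have : M = 0 := by rw [hMdef, h, norm_zero]
    linarith
  have hw0 : w (φ K0) ≠ 0 := by
    intro h
    have := hlo (φ K0)
    rw [h] at this; simp at this
    nlinarith [one_div_pos.mpr hL0]
  have heq : mu ^ A / lam ^ Bd - 1 = (w (φ k') - w (φ K0)) / w (φ K0) := by
    have h1 : φ k' = φ K0 + A := by omega
    have h2 : B (φ k') = B (φ K0) + Bd := by omega
    simp only [hwdef]
    rw [h2, h1, pow_add, pow_add]
    have hp1 : lam ^ B (φ K0) ≠ 0 := pow_ne_zero _ hlam0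
    have hp2 : lam ^ Bd ≠ 0 := pow_ne_zero _ hlam0
    have hp3 : mu ^ φ K0 ≠ 0 := pow_ne_zero _ hmu0
    field_simp
  rw [heq, norm_div]
  have hdist : ‖w (φ k') - w (φ K0)‖ < 2 * δ := by
    have d1 := hK0 k' (by omega)
    have d2 := hK0 K0 le_rfl
    have := dist_triangle (w (φ k')) x (w (φ K0))
    rw [Complex.dist_eq] at *
    calc ‖w (φ k') - w (φ K0)‖ = dist (w (φ k')) (w (φ K0)) := by
          rw [Complex.dist_eq]
      _ ≤ dist (w (φ k')) x + dist x (w (φ K0)) := dist_triangle _ _ _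
      _ < δ + δ := by rw [dist_comm x]; exact add_lt_add (by rw [Complex.dist_eq]; exact d1) (by rw [Complex.dist_eq]; exact d2)
      _ = 2 * δ := by ring
  have hlow := hlo (φ K0)
  have hwpos : 0 < ‖w (φ K0)‖ := lt_of_lt_of_le (by positivity) hlow
  calc ‖w (φ k') - w (φ K0)‖ / ‖w (φ K0)‖
      ≤ ‖w (φ k') - w (φ K0)‖ / (1 / L) := by
        apply div_le_div_of_nonneg_left (by positivity) (by positivity) hlow
      _ = ‖w (φ k') - w (φ K0)‖ * L := by field_simp
      _ < 2 * δ * L := by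
        apply mul_lt_mul_of_pos_right hdist hL0
      _ = ε := by rw [hδdef]; field_simp

/-- Given complex multipliers `λ, λ₁, …, λ_n` all of absolute value `> 1`, there exists a
sequence of tuples of positive integers `(j_ℓ, j_{1,ℓ}, …, j_{n,ℓ})` with `j_ℓ → ∞` such that
`liminf |λ_i|^{j_{i,ℓ}} / |λ|^{j_ℓ} ≥ 1` for each `i ≤ n-1` and
`λ_n^{j_{n,ℓ}} / λ^{j_ℓ} → 1`. -/
theorem exists_multiplier_sequence (n : ℕ) (hn : 0 < n) (lam : ℂ) (lams : Fin n → ℂ)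
    (hlam : 1 < ‖lam‖) (hlams : ∀ i, 1 < ‖lams i‖) :
    ∃ (j : ℕ → ℕ) (ji : Fin n → ℕ → ℕ),
      (∀ ℓ, 0 < j ℓ) ∧ (∀ i ℓ, 0 < ji i ℓ) ∧
      Tendsto (fun ℓ => (j ℓ : ℝ)) atTop atTop ∧
      (∀ i : Fin n, (i : ℕ) < n - 1 →
        1 ≤ Filter.atTop.liminf
          (fun ℓ => ‖lams i‖ ^ (ji i ℓ) / ‖lam‖ ^ (j ℓ))) ∧
      Tendsto (fun ℓ => lams ⟨n - 1, by omega⟩ ^ (ji ⟨n - 1, by omega⟩ ℓ) / lam ^ (j ℓ))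
        atTop (nhds 1) := by
  have hmu := hlams ⟨n - 1, by omega⟩
  have H : ∀ ℓ : ℕ, ∃ a b : ℕ, ℓ + 1 ≤ a ∧ ℓ + 1 ≤ b ∧
      ‖(lams ⟨n - 1, by omega⟩) ^ a / lam ^ b - 1‖ < 1 / (ℓ + 1) :=
    fun ℓ => key lam _ hlam hmu (1 / (ℓ + 1)) (by positivity) (ℓ + 1)
  choose a b ha hb hcv using H
  have hL0 : (0:ℝ) < ‖lam‖ := lt_trans one_pos hlam
  refine ⟨b, fun i ℓ => if (i : ℕ) = n - 1 then a ℓ else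
      ⌈(b ℓ : ℝ) * Real.log (‖lam‖) / Real.log (‖lams i‖)⌉₊,
      fun ℓ => by have := hb ℓ; omega, ?_, ?_, ?_, ?_⟩
  · intro i ℓ
    show 0 < (if (i : ℕ) = n - 1 then a ℓ else
      ⌈(b ℓ : ℝ) * Real.log (‖lam‖) / Real.log (‖lams i‖)⌉₊)
    by_cases h : (i : ℕ) = n - 1
    · rw [if_pos h]
      have := ha ℓ; omega
    · simp only [if_neg h]
      apply Nat.ceil_pos.mpr
      have h1 : 0 < Real.log (‖lam‖) := Real.log_pos hlam
      have h2 : 0 < Real.log (‖lams i‖) := Real.log_pos (hlams i)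
      have h3 : (0:ℝ) < b ℓ := by
        have := hb ℓ
        exact_mod_cast Nat.lt_of_lt_of_le (Nat.succ_pos ℓ) this
      positivity
  · apply tendsto_atTop_mono (f := fun ℓ : ℕ => (ℓ : ℝ))
    · intro ℓ
      have := hb ℓ
      have h2 : ℓ ≤ b ℓ := by omega
      exact_mod_cast h2
    · exact tendsto_natCast_atTop_atTop
  · intro i hi
    have hne : (i : ℕ) ≠ n - 1 := Nat.ne_of_lt hi
    simp only [if_neg hne]
    set Mi := ‖lams i‖ with hMi
    have hMi1 : 1 < Mi := hlams i
    have hbd := fun ℓ => ceil_pow_bounds (‖lam‖) Mi hlam hMi1 (b ℓ)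
    have hone : ∀ ℓ : ℕ, (1:ℝ) ≤
        Mi ^ ⌈(b ℓ : ℝ) * Real.log (‖lam‖) / Real.log Mi⌉₊
          / ‖lam‖ ^ (b ℓ) := by
      intro ℓ
      rw [le_div_iff₀ (by positivity)]
      simpa using (hbd ℓ).1
    refine le_liminf_of_le ?_ ?_
    · apply isCoboundedUnder_ge_of_eventually_le atTop (x := Mi * 1)
      filter_upwards with ℓ
      have h2 := (hbd ℓ).2
      rw [div_le_iff₀ (by positivity)]
      calc Mi ^ ⌈(b ℓ : ℝ) * Real.log (‖lam‖) / Real.log Mi⌉₊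
          ≤ Mi * ‖lam‖ ^ (b ℓ) := h2
        _ = Mi * 1 * ‖lam‖ ^ (b ℓ) := by ring
    · filter_upwards with ℓ using hone ℓ
  · have hlast : ∀ ℓ, (if (((⟨n - 1, by omega⟩ : Fin n) : ℕ)) = n - 1 then a ℓ else
        ⌈(b ℓ : ℝ) * Real.log (‖lam‖) /
          Real.log (‖lams ⟨n - 1, by omega⟩‖)⌉₊) = a ℓ :=
      fun ℓ => if_pos rfl
    simp only [hlast]
    rw [tendsto_iff_dist_tendsto_zero]
    apply squeeze_zero (fun ℓ => dist_nonneg) (fun ℓ => ?_)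
      tendsto_one_div_add_atTop_nhds_zero_nat
    rw [Complex.dist_eq]
    exact (hcv ℓ).le
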